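/- Let θ ∈ ℝ with ρ = θ/(2π) irrational, and let ξ, η be positive integers. Set ε = {ξρ} and ι = 1 − {ηρ}. Then (ε + ι) τ_0 − (−1)^{⌊ξρ⌋} ι τ_ξ + (−1)^{⌊ηρ⌋} ε τ_η = 4π² ε ι. -/
import Mathlib

open Real

/-- `τ_p = Σ_{k ∈ ℤ} (k − 1/2)⁻² cos(p (k − 1/2) θ)`. -/
noncomputable def tau (θ : ℝ) (p : ℤ) : ℝ :=
  ∑' k : ℤ, (((k : ℝ) - 1 / 2) ^ 2)⁻¹ * Real.cos ((p : ℝ) * ((k : ℝ) - 1 / 2) * θ)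

lemma bern2_num : bernoulli 2 = 1 / 6 := by
  rw [bernoulli, bernoulli'_two]
  norm_num

lemma bern2_eval (x : ℝ) :
    (Polynomial.map (algebraMap ℚ ℝ) (Polynomial.bernoulli 2)).eval x = x ^ 2 - x + 1 / 6 := by
  have h2 : Polynomial.bernoulli 2 =
      Polynomial.C (1 / 6 : ℚ) - Polynomial.X + Polynomial.X ^ 2 := by
    simp only [Polynomial.bernoulli_def]
    rw [Finset.sum_range_succ, Finset.sum_range_succ, Finset.sum_range_one]
    norm_num [bernoulli_one, bern2_num]
    rw [Polynomial.X_pow_eq_monomial, ← Polynomial.monomial_one_one_eq_X (R := ℚ)]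
    ring
  rw [h2]
  simp [Polynomial.eval_map]
  norm_num
  ring

/-- The basic Fourier series `∑ cos(2πnu)/n² = π²(u²-u+1/6)` on `[0,1]`. -/
lemma hasSum_g {u : ℝ} (hu : u ∈ Set.Icc (0:ℝ) 1) :
    HasSum (fun n : ℕ => 1 / (n : ℝ) ^ 2 * Real.cos (2 * π * n * u))
      (π ^ 2 * (u ^ 2 - u + 1 / 6)) := by
  have h := hasSum_one_div_nat_pow_mul_cos (k := 1) one_ne_zero hu
  simp only [mul_one] at h
  rw [bern2_eval] at h
  have hfac : ((2 : ℕ).factorial : ℝ) = 2 := by norm_num [Nat.factorial]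
  rw [hfac] at h
  have hv : (-1 : ℝ) ^ (1 + 1) * (2 * π) ^ 2 / 2 / 2 * (u ^ 2 - u + 1 / 6)
      = π ^ 2 * (u ^ 2 - u + 1 / 6) := by ring
  rw [hv] at h
  exact h

/-- The odd-index cosine series on `[0, 1/2]`. -/
lemma hasSum_odd {u : ℝ} (h0 : 0 ≤ u) (h1 : u ≤ 1 / 2) :
    HasSum (fun n : ℕ => 1 / ((2 * n + 1 : ℕ) : ℝ) ^ 2 * Real.cos (2 * π * ((2 * n + 1 : ℕ)) * u))
      (π ^ 2 * (1 - 4 * u) / 8) := by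
  set f : ℕ → ℝ := fun n => 1 / (n : ℝ) ^ 2 * Real.cos (2 * π * n * u) with hf
  have hS : HasSum f (π ^ 2 * (u ^ 2 - u + 1 / 6)) :=
    hasSum_g ⟨h0, by linarith⟩
  have hg2 : HasSum (fun n : ℕ => 1 / (n : ℝ) ^ 2 * Real.cos (2 * π * n * (2 * u)))
      (π ^ 2 * ((2 * u) ^ 2 - 2 * u + 1 / 6)) :=
    hasSum_g ⟨by linarith, by linarith⟩
  have hE : HasSum (fun n : ℕ => f (2 * n))
      ((1 / 4) * (π ^ 2 * ((2 * u) ^ 2 - 2 * u + 1 / 6))) := by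
    have h4 := hg2.mul_left (1 / 4)
    refine h4.congr_fun fun n => ?_
    simp only [hf]
    push_cast
    rw [show 2 * π * (2 * (n : ℝ)) * u = 2 * π * n * (2 * u) by ring,
      mul_pow, show ((2:ℝ)) ^ 2 = 4 by norm_num, one_div, one_div, mul_inv]
    ring
  have hodd_summ : Summable (fun n : ℕ => f (2 * n + 1)) :=
    hS.summable.comp_injective (fun a b h => by omega)
  have htot := hE.even_add_odd hodd_summ.hasSum
  have hval : ∑' n : ℕ, f (2 * n + 1) = π ^ 2 * (1 - 4 * u) / 8 := by
    have huniq := hS.unique htot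
    nlinarith [huniq]
  have hfin := hval ▸ hodd_summ.hasSum
  refine hfin.congr_fun fun n => ?_
  simp only [hf]
  all_goals push_cast
  all_goals ring_nf

/-- The symmetric `ℤ`-series on `[0, 2π]`. -/
lemma hasSum_T {y : ℝ} (h0 : 0 ≤ y) (h2 : y ≤ 2 * π) :
    HasSum (fun k : ℤ => (((k : ℝ) - 1 / 2) ^ 2)⁻¹ * Real.cos (((k : ℝ) - 1 / 2) * y))
      (π * (π - y)) := by
  have hπ : (0:ℝ) < π := Real.pi_pos
  set h : ℤ → ℝ := fun k => (((k : ℝ) - 1 / 2) ^ 2)⁻¹ * Real.cos (((k : ℝ) - 1 / 2) * y) with hh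
  set u : ℝ := y / (4 * π) with hu
  have hu0 : 0 ≤ u := by positivity
  have hu1 : u ≤ 1 / 2 := by
    rw [hu, div_le_iff₀ (by positivity)]
    linarith
  have hO := hasSum_odd hu0 hu1
  have harg : ∀ n : ℕ, 2 * π * ((2 * n + 1 : ℕ)) * u = ((n : ℝ) + 1 / 2) * y := by
    intro n
    rw [hu]
    push_cast
    field_simp
    ring
  have hcoef : ∀ n : ℕ, (4 : ℝ) * (1 / ((2 * n + 1 : ℕ) : ℝ) ^ 2) = (((n : ℝ) + 1 / 2) ^ 2)⁻¹ := by
    intro n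
    have hne : (2 * (n : ℝ) + 1) ≠ 0 := by positivity
    push_cast
    field_simp
    ring
  have hpos : HasSum (fun n : ℕ => h ((n : ℤ) + 1)) (4 * (π ^ 2 * (1 - 4 * u) / 8)) := by
    have h4 := hO.mul_left 4
    refine h4.congr_fun fun n => ?_
    have e1 : ((((n : ℤ) + 1 : ℤ)) : ℝ) - 1 / 2 = (n : ℝ) + 1 / 2 := by push_cast; ring
    simp only [hh]
    rw [e1, ← harg n, ← hcoef n]
    ring
  have hneg_eq : ∀ n : ℕ, h (-((n : ℤ) + 1)) = h ((n : ℤ) + 1 + 1) := by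
    intro n
    have e1 : ((-((n : ℤ) + 1) : ℤ) : ℝ) - 1 / 2 = -((n : ℝ) + 3 / 2) := by push_cast; ring
    have e2 : ((((n : ℤ) + 1 + 1 : ℤ)) : ℝ) - 1 / 2 = (n : ℝ) + 3 / 2 := by push_cast; ring
    simp only [hh]
    rw [e1, e2, show (-((n : ℝ) + 3 / 2)) * y = -(((n : ℝ) + 3 / 2) * y) by ring,
      Real.cos_neg, neg_sq]
  have hq0 : h ((0 : ℤ) + 1) = 4 * Real.cos (y / 2) := by
    have e1 : (((0 : ℤ) + 1 : ℤ) : ℝ) - 1 / 2 = 1 / 2 := by push_cast; ring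
    simp only [hh]
    rw [e1, show (1 / 2 : ℝ) * y = y / 2 by ring]
    norm_num
  have hneg : HasSum (fun n : ℕ => h (-((n : ℤ) + 1)))
      (4 * (π ^ 2 * (1 - 4 * u) / 8) - 4 * Real.cos (y / 2)) := by
    have h1 := (hasSum_nat_add_iff' (f := fun n : ℕ => h ((n : ℤ) + 1)) 1).mpr hpos
    simp only [Finset.sum_range_one, Nat.cast_zero] at h1
    rw [hq0] at h1
    refine h1.congr_fun fun n => ?_
    rw [hneg_eq n]
    exact congrArg h (by push_cast; ring)
  have h00 : h 0 = 4 * Real.cos (y / 2) := by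
    have e1 : (((0 : ℤ)) : ℝ) - 1 / 2 = -(1 / 2) := by push_cast; ring
    simp only [hh]
    rw [e1, show (-(1 / 2) : ℝ) * y = -(y / 2) by ring, Real.cos_neg]
    norm_num
  have htot := hpos.of_add_one_of_neg_add_one hneg
  rw [h00] at htot
  have hval : 4 * (π ^ 2 * (1 - 4 * u) / 8) + 4 * Real.cos (y / 2) +
      (4 * (π ^ 2 * (1 - 4 * u) / 8) - 4 * Real.cos (y / 2)) = π * (π - y) := by
    rw [hu]
    field_simp
    ring
  rw [hval] at htot
  exact htot

/-- The general closed form: the triangle wave. -/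
lemma hasSum_T_all (y : ℝ) :
    HasSum (fun k : ℤ => (((k : ℝ) - 1 / 2) ^ 2)⁻¹ * Real.cos (((k : ℝ) - 1 / 2) * y))
      ((-1 : ℝ) ^ ⌊y / (2 * π)⌋ * (π ^ 2 * (1 - 2 * Int.fract (y / (2 * π))))) := by
  have hπ : (0:ℝ) < π := Real.pi_pos
  set t : ℝ := y / (2 * π) with ht
  set m : ℤ := ⌊t⌋ with hm
  set s : ℝ := Int.fract t with hs
  have hy : y = 2 * π * s + 2 * π * m := by
    have h1 : (m : ℝ) + s = t := by rw [hm, hs]; exact Int.floor_add_fract t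
    have h2 : y = t * (2 * π) := by rw [ht]; field_simp
    rw [h2, ← h1]; ring
  have hbase := hasSum_T (y := 2 * π * s)
    (mul_nonneg (by positivity) (by rw [hs]; exact Int.fract_nonneg t)) (by nlinarith [Int.fract_lt_one t, Int.fract_nonneg t])
  have hval : π * (π - 2 * π * s) = π ^ 2 * (1 - 2 * s) := by ring
  rw [hval] at hbase
  have hm1 := hbase.mul_left ((-1 : ℝ) ^ m)
  refine hm1.congr_fun fun k => ?_
  have hcos : Real.cos (((k : ℝ) - 1 / 2) * y)
      = (-1 : ℝ) ^ m * Real.cos (((k : ℝ) - 1 / 2) * (2 * π * s)) := by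
    rw [hy]
    have harg : ((k : ℝ) - 1 / 2) * (2 * π * s + 2 * π * m)
        = (((k : ℝ) - 1 / 2) * (2 * π * s) + ((k * m : ℤ) : ℝ) * (2 * π)) + ((-m : ℤ) : ℝ) * π := by
      push_cast
      ring
    rw [harg, Real.cos_add_int_mul_pi, Real.cos_add_int_mul_two_pi]
    congr 1
    rw [zpow_neg, show ((-1 : ℝ) ^ m)⁻¹ = ((-1 : ℝ)⁻¹) ^ m from (inv_zpow _ _).symm]
    norm_num
  rw [hcos]
  ring

lemma tau_eq (θ : ℝ) (p : ℤ) :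
    tau θ p = (-1 : ℝ) ^ ⌊(p : ℝ) * θ / (2 * π)⌋ *
      (π ^ 2 * (1 - 2 * Int.fract ((p : ℝ) * θ / (2 * π)))) := by
  have h := hasSum_T_all ((p : ℝ) * θ)
  rw [tau, ← h.tsum_eq]
  exact tsum_congr fun k => by ring_nf

/-- The normalization combination:
`(ε + ι) τ₀ − (−1)^⌊ξρ⌋ ι τ_ξ + (−1)^⌊ηρ⌋ ε τ_η = 4π² ε ι`. -/
theorem stmt_10 (θ ρ : ℝ) (hρ : ρ = θ / (2 * π)) (hirr : Irrational ρ)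
    (ξ η : ℤ) (hξ : 0 < ξ) (hη : 0 < η)
    (ε ι : ℝ) (hε : ε = Int.fract ((ξ : ℝ) * ρ)) (hι : ι = 1 - Int.fract ((η : ℝ) * ρ)) :
    (ε + ι) * tau θ 0 - (-1 : ℝ) ^ ⌊(ξ : ℝ) * ρ⌋ * ι * tau θ ξ +
      (-1 : ℝ) ^ ⌊(η : ℝ) * ρ⌋ * ε * tau θ η = 4 * π ^ 2 * ε * ι := by
  have hθρ : ∀ p : ℤ, (p : ℝ) * θ / (2 * π) = (p : ℝ) * ρ := fun p => by rw [hρ]; ring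
  have h0 : tau θ 0 = π ^ 2 := by
    rw [tau_eq]
    norm_num
  have hfη : Int.fract ((η : ℝ) * ρ) = 1 - ι := by linarith
  rw [h0, tau_eq, tau_eq, hθρ, hθρ, ← hε, hfη]
  have ha : ((-1 : ℝ) ^ ⌊(ξ : ℝ) * ρ⌋) * ((-1 : ℝ) ^ ⌊(ξ : ℝ) * ρ⌋) = 1 := by
    rw [← mul_zpow]; norm_num
  have hb : ((-1 : ℝ) ^ ⌊(η : ℝ) * ρ⌋) * ((-1 : ℝ) ^ ⌊(η : ℝ) * ρ⌋) = 1 := by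
    rw [← mul_zpow]; norm_num
  linear_combination (-(ι * (π ^ 2 * (1 - 2 * ε)))) * ha +
    (ε * (π ^ 2 * (1 - 2 * (1 - ι)))) * hb
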